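/- Suppose S is a set of proper intervals of [n+1] with |S| = i_max + 1 whose associahedron-facet intersection graph has exactly 2 connected components S₁ ⊔ S₂. Then one of S₁, S₂ is a singleton {γ}, γ is a special interval (i(γ) = i_max), and the other component consists exactly of all i_max intervals γ̃ that either intersect γ nontrivially or are disjoint from γ with γ ∪ γ̃ an interval. -/

import Mathlib

/-!
An interval `[a, b]` of `[n + 1]` corresponds to the chord `(a - 1, b + 1)` of an `(n + 3)`-gon,
and two intervals are related exactly when their chords cross. Hence `i([a, b]) = ℓ (n + 1 - ℓ)`
with `ℓ = b - a + 1`, and `i_max = ⌊(n + 1)² / 4⌋`.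

Intervals in different components of the facet graph are related, so the chords of one component
cross all chords of the other. If both components had two or more members, fix a chord of each:
every chord of one family joins an endpoint inside the fixed chord of the other family to one
outside it, so the families have at most `ab` and `cd` members, where `a + b + c + d ≤ n + 3`
counts disjoint sets of vertices of the polygon. This forces `|S| ≤ ⌊(n + 1)² / 4⌋ = i_max`.
So one component is a single interval `γ`, the `i_max` other members of `S` are all related to
`γ`, and since `i(γ) ≤ i_max` they are all the intervals related to `γ`.
-/

/-- An interval `{a, a+1, ..., b}` with `1 ≤ a ≤ b ≤ n+1`, viewed inside `[n+1]`. -/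
def IsInterval (n : ℕ) (S : Finset ℕ) : Prop :=
  ∃ a b : ℕ, 1 ≤ a ∧ a ≤ b ∧ b ≤ n + 1 ∧ S = Finset.Icc a b

/-- `γ̃` either intersects `γ` nontrivially, or is disjoint from `γ` with
`γ ∪ γ̃` an interval (connected union in the path graph). -/
def iRel (n : ℕ) (γ J : Finset ℕ) : Prop :=
  (γ ∩ J ≠ ∅ ∧ γ ∩ J ≠ γ ∧ γ ∩ J ≠ J) ∨ (γ ∩ J = ∅ ∧ IsInterval n (γ ∪ J))

/-- `i(γ)`: the number of intervals `γ̃` related to `γ` as above. -/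
noncomputable def iCount (n : ℕ) (γ : Finset ℕ) : ℕ :=
  Nat.card {J : Finset ℕ // IsInterval n J ∧ iRel n γ J}

/-- `i_max`: the maximum of `i(γ)` over all intervals `γ`. -/
noncomputable def iMax (n : ℕ) : ℕ :=
  sSup {k | ∃ γ : Finset ℕ, IsInterval n γ ∧ iCount n γ = k}

def facetMeets (n : ℕ) (I J : Finset ℕ) : Prop :=
  (I ∩ J = ∅ ∨ I ∩ J = I ∨ I ∩ J = J) ∧ ¬(I ∩ J = ∅ ∧ IsInterval n (I ∪ J))

open Finset

lemma three_le_add_of_two_le_mul {a b : ℕ} (h : 2 ≤ a * b) : 3 ≤ a + b := by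
  by_contra! hlt
  have := four_mul_le_sq_add a b
  have : (a + b) ^ 2 ≤ 2 ^ 2 := Nat.pow_le_pow_left (by omega) 2
  nlinarith

lemma mul_add_mul_le_sq_div_four {a b c d s : ℕ} (hab : 2 ≤ a * b) (hcd : 2 ≤ c * d)
    (hs : a + b + c + d ≤ s + 2) : a * b + c * d ≤ s ^ 2 / 4 := by
  rw [Nat.le_div_iff_mul_le four_pos]
  have h₁ : 4 * (a * b) ≤ (a + b) ^ 2 := by simpa [mul_assoc] using four_mul_le_sq_add a b
  have h₂ : 4 * (c * d) ≤ (c + d) ^ 2 := by simpa [mul_assoc] using four_mul_le_sq_add c d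
  obtain ⟨x, hx⟩ := Nat.exists_eq_add_of_le (three_le_add_of_two_le_mul hab)
  obtain ⟨y, hy⟩ := Nat.exists_eq_add_of_le (three_le_add_of_two_le_mul hcd)
  rw [hx] at h₁
  rw [hy] at h₂
  have hs' : (3 + x + y + 1) ^ 2 ≤ s ^ 2 := Nat.pow_le_pow_left (by omega) 2
  rcases Nat.eq_zero_or_pos (x + y) with h₀ | h₀
  · obtain ⟨rfl, rfl⟩ : x = 0 ∧ y = 0 := by omega
    have : a * b ≤ 2 := by linarith
    have : c * d ≤ 2 := by linarith
    linarith
  · have : (3 + x) ^ 2 + (3 + y) ^ 2 ≤ (3 + x + y + 1) ^ 2 := by nlinarith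
    linarith

lemma mul_tsub_le_sq_div_four (k N : ℕ) : k * (N - k) ≤ N ^ 2 / 4 := by
  rw [Nat.le_div_iff_mul_le four_pos]
  rcases le_total k N with h | h
  · obtain ⟨j, rfl⟩ := Nat.exists_eq_add_of_le h
    rw [Nat.add_sub_cancel_left]
    nlinarith [sq_nonneg ((k : ℤ) - j)]
  · simp [Nat.sub_eq_zero_of_le h]

lemma ceil_half_mul_tsub_ceil_half (N : ℕ) : (N + 1) / 2 * (N - (N + 1) / 2) = N ^ 2 / 4 := by
  obtain ⟨k, rfl | rfl⟩ := Nat.even_or_odd' N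
  · rw [show (2 * k + 1) / 2 = k by omega, show 2 * k - k = k by omega,
      show (2 * k) ^ 2 = 4 * (k * k) by ring]
    omega
  · rw [show (2 * k + 1 + 1) / 2 = k + 1 by omega, show 2 * k + 1 - (k + 1) = k by omega,
      show (2 * k + 1) ^ 2 = 4 * (k * k + k) + 1 by ring, Nat.add_mul, one_mul]
    omega

/-- Chords `(i, j)`, `i < j`, of a convex polygon with vertices labelled in cyclic order
cross iff their endpoints interleave. -/
def Crosses (p q : ℕ × ℕ) : Prop :=
  p.1 < q.1 ∧ q.1 < p.2 ∧ p.2 < q.2 ∨ q.1 < p.1 ∧ p.1 < q.2 ∧ q.2 < p.2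

lemma Crosses.symm {p q : ℕ × ℕ} (h : Crosses p q) : Crosses q p := by
  unfold Crosses at *
  omega

def endpoints (A : Finset (ℕ × ℕ)) : Finset ℕ :=
  A.image Prod.fst ∪ A.image Prod.snd

section Endpoints

variable {A B : Finset (ℕ × ℕ)}

lemma fst_mem_endpoints {p : ℕ × ℕ} (hp : p ∈ A) : p.1 ∈ endpoints A :=
  mem_union_left _ (mem_image_of_mem _ hp)

lemma snd_mem_endpoints {p : ℕ × ℕ} (hp : p ∈ A) : p.2 ∈ endpoints A :=
  mem_union_right _ (mem_image_of_mem _ hp)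

lemma exists_of_mem_endpoints {x : ℕ} (hx : x ∈ endpoints A) : ∃ p ∈ A, x = p.1 ∨ x = p.2 := by
  simp only [endpoints, mem_union, mem_image] at hx
  rcases hx with ⟨p, hp, rfl⟩ | ⟨p, hp, rfl⟩
  exacts [⟨p, hp, .inl rfl⟩, ⟨p, hp, .inr rfl⟩]

lemma disjoint_endpoints_of_forall_crosses (h : ∀ p ∈ A, ∀ q ∈ B, Crosses p q) :
    Disjoint (endpoints A) (endpoints B) := by
  refine disjoint_left.2 fun x hxA hxB => ?_
  obtain ⟨p, hp, hpx⟩ := exists_of_mem_endpoints hxA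
  obtain ⟨q, hq, hqx⟩ := exists_of_mem_endpoints hxB
  have := h p hp q hq
  unfold Crosses at this
  omega

lemma endpoints_subset_range {m : ℕ} (h : ∀ p ∈ A, p.1 < p.2 ∧ p.2 ≤ m + 1) :
    endpoints A ⊆ range (m + 2) := fun x hx => by
  obtain ⟨p, hp, hpx⟩ := exists_of_mem_endpoints hx
  have := h p hp
  rw [mem_range]
  omega

/-- A chord crossing `q` is determined by its endpoint strictly inside `q` and its endpoint
outside `q`. -/
lemma card_le_card_mul_card_of_forall_crosses {q : ℕ × ℕ} (h : ∀ p ∈ A, Crosses p q) :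
    #A ≤ #{x ∈ endpoints A | q.1 < x ∧ x < q.2} * #{x ∈ endpoints A | ¬(q.1 < x ∧ x < q.2)} := by
  rw [← card_product]
  refine (card_le_card fun p hp => ?_).trans
    (card_image_le (f := fun x => (min x.1 x.2, max x.1 x.2)))
  have hpq := h p hp
  unfold Crosses at hpq
  simp only [mem_image, mem_product, mem_filter, Prod.exists]
  by_cases hin : q.1 < p.1 ∧ p.1 < q.2
  · exact ⟨p.1, p.2, ⟨⟨fst_mem_endpoints hp, hin⟩, snd_mem_endpoints hp, by omega⟩,
      Prod.ext (by omega) (by omega)⟩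
  · exact ⟨p.2, p.1, ⟨⟨snd_mem_endpoints hp, by omega⟩, fst_mem_endpoints hp, hin⟩,
      Prod.ext (by omega) (by omega)⟩

theorem card_add_card_le_of_forall_crosses {m : ℕ}
    (hA : ∀ p ∈ A, p.1 < p.2 ∧ p.2 ≤ m + 1) (hB : ∀ q ∈ B, q.1 < q.2 ∧ q.2 ≤ m + 1)
    (hAB : ∀ p ∈ A, ∀ q ∈ B, Crosses p q) (h2A : 2 ≤ #A) (h2B : 2 ≤ #B) :
    #A + #B ≤ m ^ 2 / 4 := by
  obtain ⟨p₀, hp₀⟩ : A.Nonempty := card_pos.1 (by omega)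
  obtain ⟨q₀, hq₀⟩ : B.Nonempty := card_pos.1 (by omega)
  have hA' := card_le_card_mul_card_of_forall_crosses fun p hp => hAB p hp q₀ hq₀
  have hB' := card_le_card_mul_card_of_forall_crosses fun q hq => (hAB p₀ hp₀ q hq).symm
  have hends : #(endpoints A) + #(endpoints B) ≤ m + 2 := by
    rw [← card_union_of_disjoint (disjoint_endpoints_of_forall_crosses hAB), ← card_range (m + 2)]
    exact card_le_card (union_subset (endpoints_subset_range hA) (endpoints_subset_range hB))
  rw [← card_filter_add_card_filter_not (fun x => q₀.1 < x ∧ x < q₀.2),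
    ← card_filter_add_card_filter_not (s := endpoints B) (fun x => p₀.1 < x ∧ x < p₀.2)] at hends
  exact (add_le_add hA' hB').trans
    (mul_add_mul_le_sq_div_four (h2A.trans hA') (h2B.trans hB') (by omega))

end Endpoints

lemma Finset.Icc_eq_Icc_iff {α : Type*} [PartialOrder α] [LocallyFiniteOrder α] {a b c d : α}
    (h : a ≤ b) : Icc a b = Icc c d ↔ a = c ∧ b = d := by
  rw [← coe_inj, coe_Icc, coe_Icc, Set.Icc_eq_Icc_iff h]

lemma Nat.Icc_inter_Icc (a b c d : ℕ) : Icc a b ∩ Icc c d = Icc (max a c) (min b d) := by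
  ext x
  simp only [mem_inter, mem_Icc]
  omega

lemma iRel_comm {n : ℕ} {I J : Finset ℕ} : iRel n I J ↔ iRel n J I := by
  simp only [iRel, inter_comm I, union_comm I]
  tauto

lemma iRel_of_not_facetMeets {n : ℕ} {I J : Finset ℕ} (h : ¬facetMeets n I J) : iRel n I J := by
  unfold facetMeets at h
  unfold iRel
  tauto

section Icc

variable {n a b c d : ℕ}

lemma isInterval_Icc_union_Icc_iff (ha : 1 ≤ a) (hab : a ≤ b) (hb : b ≤ n + 1)
    (hc : 1 ≤ c) (hcd : c ≤ d) (hd : d ≤ n + 1) :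
    IsInterval n (Icc a b ∪ Icc c d) ↔ c ≤ b + 1 ∧ a ≤ d + 1 := by
  constructor
  · rintro ⟨e, f, -, -, -, hef⟩
    have key : ∀ x, (a ≤ x ∧ x ≤ b ∨ c ≤ x ∧ x ≤ d) ↔ e ≤ x ∧ x ≤ f := by
      simpa only [Finset.ext_iff, mem_union, mem_Icc] using hef
    have := key a; have := key b; have := key c; have := key d
    have := key (b + 1); have := key (d + 1)
    omega
  · refine fun h => ⟨min a c, max b d, by omega, by omega, by omega, ?_⟩
    ext x
    simp only [mem_union, mem_Icc]
    omega

lemma iRel_Icc_Icc_iff (ha : 1 ≤ a) (hab : a ≤ b) (hb : b ≤ n + 1)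
    (hc : 1 ≤ c) (hcd : c ≤ d) (hd : d ≤ n + 1) :
    iRel n (Icc a b) (Icc c d) ↔ Crosses (a - 1, b + 1) (c - 1, d + 1) := by
  rw [iRel, Nat.Icc_inter_Icc, isInterval_Icc_union_Icc_iff ha hab hb hc hcd hd, Ne, Ne, Ne,
    Icc_eq_empty_iff, @eq_comm _ _ (Icc a b), @eq_comm _ _ (Icc c d), Icc_eq_Icc_iff hab,
    Icc_eq_Icc_iff hcd, Crosses]
  omega

end Icc

noncomputable def chord (I : Finset ℕ) : ℕ × ℕ :=
  (sInf (I : Set ℕ) - 1, sSup (I : Set ℕ) + 1)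

section Chord

variable {n : ℕ} {I J : Finset ℕ}

lemma chord_Icc {a b : ℕ} (h : a ≤ b) : chord (Icc a b) = (a - 1, b + 1) := by
  rw [chord, coe_Icc, csInf_Icc h, csSup_Icc h]

lemma chord_lt_of_isInterval (hI : IsInterval n I) :
    (chord I).1 < (chord I).2 ∧ (chord I).2 ≤ n + 2 := by
  obtain ⟨a, b, -, hab, hb, rfl⟩ := hI
  rw [chord_Icc hab]
  omega

lemma crosses_chord_iff (hI : IsInterval n I) (hJ : IsInterval n J) :
    Crosses (chord I) (chord J) ↔ iRel n I J := by
  obtain ⟨a, b, ha, hab, hb, rfl⟩ := hI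
  obtain ⟨c, d, hc, hcd, hd, rfl⟩ := hJ
  rw [chord_Icc hab, chord_Icc hcd, iRel_Icc_Icc_iff ha hab hb hc hcd hd]

lemma chord_injOn : Set.InjOn chord {I | IsInterval n I} := by
  rintro _ ⟨a, b, ha, hab, -, rfl⟩ _ ⟨c, d, hc, hcd, -, rfl⟩ h
  rw [chord_Icc hab, chord_Icc hcd, Prod.mk.injEq] at h
  rw [show a = c by omega, show b = d by omega]

theorem card_add_card_le_of_forall_iRel {P Q : Finset (Finset ℕ)}
    (hP : ∀ I ∈ P, IsInterval n I) (hQ : ∀ J ∈ Q, IsInterval n J)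
    (hPQ : ∀ I ∈ P, ∀ J ∈ Q, iRel n I J) (h2P : 2 ≤ #P) (h2Q : 2 ≤ #Q) :
    #P + #Q ≤ (n + 1) ^ 2 / 4 := by
  have hcard : ∀ R : Finset (Finset ℕ), (∀ I ∈ R, IsInterval n I) → #(R.image chord) = #R :=
    fun R hR => card_image_of_injOn (chord_injOn.mono hR)
  rw [← hcard P hP] at h2P ⊢
  rw [← hcard Q hQ] at h2Q ⊢
  refine card_add_card_le_of_forall_crosses ?_ ?_ ?_ h2P h2Q
  · simpa only [forall_mem_image] using fun I hI => chord_lt_of_isInterval (hP I hI)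
  · simpa only [forall_mem_image] using fun J hJ => chord_lt_of_isInterval (hQ J hJ)
  · simp only [forall_mem_image]
    exact fun I hI J hJ => (crosses_chord_iff (hP I hI) (hQ J hJ)).2 (hPQ I hI J hJ)

end Chord

/-- The intervals related to `[a, b]`, listed by endpoints: their chords `(c - 1, d + 1)` cross
`(a - 1, b + 1)` either with `a - 1 < c - 1 < b + 1 < d + 1` or with
`c - 1 < a - 1 < d + 1 < b + 1`. -/
def relatedIntervals (n a b : ℕ) : Finset (Finset ℕ) :=
  (Ioc a (b + 1) ×ˢ Ioc b (n + 1) ∪ Ico 1 a ×ˢ Ico (a - 1) b).image fun p => Icc p.1 p.2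

section Count

variable {n a b : ℕ}

lemma mem_relatedIntervals (ha : 1 ≤ a) (hab : a ≤ b) (hb : b ≤ n + 1) {J : Finset ℕ} :
    J ∈ relatedIntervals n a b ↔ IsInterval n J ∧ iRel n (Icc a b) J := by
  simp only [relatedIntervals, mem_image, mem_union, mem_product, mem_Ioc, mem_Ico, Prod.exists]
  constructor
  · rintro ⟨c, d, h, rfl⟩
    obtain ⟨hc, hcd, hd⟩ : 1 ≤ c ∧ c ≤ d ∧ d ≤ n + 1 := by omega
    refine ⟨⟨c, d, hc, hcd, hd, rfl⟩, (iRel_Icc_Icc_iff ha hab hb hc hcd hd).2 ?_⟩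
    unfold Crosses
    omega
  · rintro ⟨⟨c, d, hc, hcd, hd, rfl⟩, hrel⟩
    rw [iRel_Icc_Icc_iff ha hab hb hc hcd hd, Crosses] at hrel
    exact ⟨c, d, by omega, rfl⟩

lemma card_relatedIntervals (ha : 1 ≤ a) (hab : a ≤ b) (hb : b ≤ n + 1) :
    #(relatedIntervals n a b) = (b + 1 - a) * (n + 1 - (b + 1 - a)) := by
  rw [relatedIntervals, card_image_of_injOn, card_union_of_disjoint, card_product, card_product,
    Nat.card_Ioc, Nat.card_Ioc, Nat.card_Ico, Nat.card_Ico, show b - (a - 1) = b + 1 - a by omega,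
    mul_comm (a - 1), ← Nat.mul_add]
  · congr 1
    omega
  · refine disjoint_left.2 fun p hp hp' => ?_
    simp only [mem_product, mem_Ioc, mem_Ico] at hp hp'
    omega
  · rintro ⟨c, d⟩ hcd ⟨c', d'⟩ - h
    simp only [coe_union, coe_product, Set.mem_union, Set.mem_prod, coe_Ioc, coe_Ico,
      Set.mem_Ioc, Set.mem_Ico] at hcd
    simpa using (Icc_eq_Icc_iff (by omega)).1 h

lemma iCount_Icc (ha : 1 ≤ a) (hab : a ≤ b) (hb : b ≤ n + 1) :
    iCount n (Icc a b) = #(relatedIntervals n a b) := by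
  rw [iCount, ← Nat.card_eq_finsetCard]
  exact Nat.card_congr (Equiv.subtypeEquivRight fun J => (mem_relatedIntervals ha hab hb).symm)

end Count

lemma iCount_le {n : ℕ} {γ : Finset ℕ} (hγ : IsInterval n γ) : iCount n γ ≤ (n + 1) ^ 2 / 4 := by
  obtain ⟨a, b, ha, hab, hb, rfl⟩ := hγ
  rw [iCount_Icc ha hab hb, card_relatedIntervals ha hab hb]
  exact mul_tsub_le_sq_div_four _ _

lemma iMax_eq (n : ℕ) : iMax n = (n + 1) ^ 2 / 4 := by
  refine IsGreatest.csSup_eq ⟨⟨Icc 1 ((n + 2) / 2), ⟨1, _, le_rfl, by omega, by omega, rfl⟩, ?_⟩,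
    fun k ⟨γ, hγ, hk⟩ => hk ▸ iCount_le hγ⟩
  rw [iCount_Icc le_rfl (by omega) (by omega), card_relatedIntervals le_rfl (by omega) (by omega),
    ← ceil_half_mul_tsub_ceil_half]
  rfl

lemma exists_split_of_one_lt_card_connectedComponent {α : Type*} [DecidableEq α] {S : Finset α}
    {r : α → α → Prop}
    (h : 1 < Nat.card
      (SimpleGraph.fromRel fun I J : {I // I ∈ S} => r I.1 J.1).ConnectedComponent) :
    ∃ P ⊆ S, P.Nonempty ∧ (S \ P).Nonempty ∧ ∀ I ∈ P, ∀ J ∈ S \ P, ¬r I J := by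
  classical
  set G := SimpleGraph.fromRel fun I J : {I // I ∈ S} => r I.1 J.1
  have : Finite G.ConnectedComponent := Nat.finite_of_card_ne_zero (by omega)
  obtain ⟨c, c', hcc'⟩ := (Finite.one_lt_card_iff_nontrivial.1 h).exists_pair_ne
  obtain ⟨v, hv⟩ : ∃ v, G.connectedComponentMk v = c := Quot.exists_rep c
  obtain ⟨w, hw⟩ : ∃ w, G.connectedComponentMk w = c' := Quot.exists_rep c'
  refine ⟨S.filter fun I => ∃ hI : I ∈ S, G.connectedComponentMk ⟨I, hI⟩ = c,
    filter_subset _ _, ⟨v, mem_filter.2 ⟨v.2, v.2, hv⟩⟩, ⟨w, ?_⟩, ?_⟩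
  · simp only [mem_sdiff, mem_filter, w.2, true_and, not_exists]
    exact fun _ h => hcc' (h.symm.trans hw)
  · simp only [mem_sdiff, mem_filter, not_and, not_exists]
    rintro I ⟨-, hI, hIc⟩ J ⟨hJ, hJc⟩ hr
    have hIJ : I ≠ J := by
      rintro rfl
      exact hJc hI hI hIc
    have hadj : G.Adj ⟨I, hI⟩ ⟨J, hJ⟩ :=
      (SimpleGraph.fromRel_adj _ _ _).2 ⟨fun h => hIJ (congrArg Subtype.val h), .inl hr⟩
    have hIJc := SimpleGraph.ConnectedComponent.connectedComponentMk_eq_of_adj hadj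
    exact hJc hJ hJ (hIJc.symm.trans hIc)

/-- At most `i_max` intervals are related to `γ`, so the `i_max` other members of `S` are all. -/
lemma iCount_eq_iMax_of_forall_iRel {n : ℕ} {S : Finset (Finset ℕ)} {γ : Finset ℕ}
    (hS : ∀ I ∈ S, IsInterval n I) (hcard : #S = iMax n + 1) (hγ : γ ∈ S)
    (hrel : ∀ J ∈ S, J ≠ γ → iRel n γ J) :
    iCount n γ = iMax n ∧ ∀ J, (J ∈ S ∧ J ≠ γ) ↔ (IsInterval n J ∧ iRel n γ J) := by
  obtain ⟨a, b, ha, hab, hb, rfl⟩ := hS γ hγ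
  have hsub : S.erase (Icc a b) ⊆ relatedIntervals n a b := fun J hJ =>
    (mem_relatedIntervals ha hab hb).2
      ⟨hS J (mem_of_mem_erase hJ), hrel J (mem_of_mem_erase hJ) (ne_of_mem_erase hJ)⟩
  have hcard_erase : #(S.erase (Icc a b)) = iMax n := by
    rw [card_erase_of_mem hγ, hcard, Nat.add_sub_cancel]
  have heq : S.erase (Icc a b) = relatedIntervals n a b := by
    refine eq_of_subset_of_card_le hsub ?_
    rw [hcard_erase, ← iCount_Icc ha hab hb, iMax_eq]
    exact iCount_le ⟨a, b, ha, hab, hb, rfl⟩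
  refine ⟨by rw [iCount_Icc ha hab hb, ← heq, hcard_erase], fun J => ?_⟩
  rw [← mem_relatedIntervals ha hab hb, ← heq, mem_erase, and_comm]

lemma exists_forall_iRel_of_forall_iRel_sdiff {n : ℕ} {S P : Finset (Finset ℕ)}
    (hS : ∀ I ∈ S, IsInterval n I) (hcard : #S = iMax n + 1) (hPS : P ⊆ S) (hP : P.Nonempty)
    (hQ : (S \ P).Nonempty) (hrel : ∀ I ∈ P, ∀ J ∈ S \ P, iRel n I J) :
    ∃ γ ∈ S, ∀ J ∈ S, J ≠ γ → iRel n γ J := by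
  by_cases hP1 : #P = 1
  · obtain ⟨γ, rfl⟩ := card_eq_one.1 hP1
    refine ⟨γ, hPS (mem_singleton_self γ), fun J hJ hJγ => hrel γ (mem_singleton_self γ) J ?_⟩
    exact mem_sdiff.2 ⟨hJ, by simpa using hJγ⟩
  by_cases hQ1 : #(S \ P) = 1
  · obtain ⟨γ, hγ⟩ := card_eq_one.1 hQ1
    have hγS : γ ∈ S \ P := hγ ▸ mem_singleton_self γ
    refine ⟨γ, (mem_sdiff.1 hγS).1, fun J hJ hJγ => iRel_comm.1 (hrel J ?_ γ hγS)⟩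
    by_contra hJP
    exact hJγ (mem_singleton.1 (hγ ▸ mem_sdiff.2 ⟨hJ, hJP⟩))
  have := card_pos.2 hP
  have := card_pos.2 hQ
  have hsplit : #(S \ P) + #P = (n + 1) ^ 2 / 4 + 1 := by
    rw [card_sdiff_add_card_eq_card hPS, hcard, iMax_eq]
  have := card_add_card_le_of_forall_iRel (fun I hI => hS I (hPS hI))
    (fun J hJ => hS J (mem_sdiff.1 hJ).1) hrel (by omega) (by omega)
  omega

theorem stmt13 {n : ℕ} (S : Finset (Finset ℕ))
    (hS : ∀ I ∈ S, IsInterval n I ∧ I ≠ Finset.Icc 1 (n + 1))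
    (hcard : S.card = iMax n + 1)
    (h2 : Nat.card
      (SimpleGraph.fromRel
        fun I J : {I // I ∈ S} => facetMeets n I.1 J.1).ConnectedComponent = 2) :
    ∃ γ ∈ S, iCount n γ = iMax n ∧
      ∀ J : Finset ℕ, (J ∈ S ∧ J ≠ γ) ↔ (IsInterval n J ∧ iRel n γ J) := by
  have hSint : ∀ I ∈ S, IsInterval n I := fun I hI => (hS I hI).1
  obtain ⟨P, hPS, hP, hQ, hPQ⟩ :=
    exists_split_of_one_lt_card_connectedComponent (h2 ▸ one_lt_two : 1 < _)
  obtain ⟨γ, hγ, hγrel⟩ := exists_forall_iRel_of_forall_iRel_sdiff hSint hcard hPS hP hQ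
    fun I hI J hJ => iRel_of_not_facetMeets (hPQ I hI J hJ)
  exact ⟨γ, hγ, iCount_eq_iMax_of_forall_iRel hSint hcard hγ hγrel⟩
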